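/- arXiv:1709.04530 — 2 statements merged into one kernel-verified Lean document; each statement's English description precedes it below -/
import Mathlib

section
/- (Positivity of the innovation covariance in unstable directions.) Let A, C, Q, R, P̄ be real matrices with Q positive definite, R positive definite, and P̄ symmetric positive semidefinite satisfying the discrete algebraic Riccati equation P̄ = A P̄ Aᵀ + Q − A P̄ Cᵀ (C P̄ Cᵀ + R)^{−1} C P̄ Aᵀ. Let K = P̄ Cᵀ (C P̄ Cᵀ + R)^{−1} and Q̄ = K (C P̄ Cᵀ + R) Kᵀ. If v ∈ ℂⁿ is a nonzero left eigenvector of A with eigenvalue λ ∈ ℂ (i.e., v* A = λ v*, identifying A with its complexification) and |λ| ≥ 1, then v* Q̄ v > 0 (this quantity is real since Q̄ is real symmetric). -/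
/-!
With `S = C P̄ Cᵀ + R`, the innovation covariance is `Q̄ = P̄ Cᵀ S⁻¹ C P̄`, so the Riccati equation
reads `P̄ = A P̄ Aᵀ + Q - A Q̄ Aᵀ`. At a left eigenvector `v` the quadratic form of `A M Aᵀ` is
`|λ|²` times that of `M`, whence `|λ|² v*Q̄v = (|λ|² - 1) v*P̄v + v*Qv > 0`. The quadratic forms are
compared in the partial order of `ℂ`, where `0 < z` says exactly that `z` is a positive real.
-/

open Matrix
open scoped ComplexOrder MatrixOrder

namespace Matrix

variable {n : Type*} [Fintype n]

theorem PosSemidef.map_algebraMap {𝕜 : Type*} [RCLike 𝕜] [DecidableEq n] {A : Matrix n n ℝ}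
    (hA : A.PosSemidef) : (A.map (algebraMap ℝ 𝕜)).PosSemidef := by
  obtain ⟨B, rfl⟩ := CStarAlgebra.nonneg_iff_eq_star_mul_self.mp hA.nonneg
  rw [← RingHom.mapMatrix_apply, map_mul, RingHom.mapMatrix_apply, star_eq_conjTranspose,
    conjTranspose_map _ fun x => (RCLike.conj_ofReal x).symm]
  exact posSemidef_conjTranspose_mul_self _

theorem PosDef.map_algebraMap {𝕜 : Type*} [RCLike 𝕜] [DecidableEq n] {A : Matrix n n ℝ}
    (hA : A.PosDef) : (A.map (algebraMap ℝ 𝕜)).PosDef := by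
  rw [hA.posSemidef.map_algebraMap.posDef_iff_isUnit, isUnit_iff_isUnit_det,
    ← RingHom.mapMatrix_apply, ← RingHom.map_det]
  exact ((isUnit_iff_isUnit_det A).mp hA.isUnit).map _

theorem star_dotProduct_mul_mul_conjTranspose_mulVec {α : Type*} [CommRing α] [StarRing α]
    {A : Matrix n n α} (M : Matrix n n α) {v : n → α} {l : α}
    (hv : star v ᵥ* A = l • star v) :
    star v ⬝ᵥ (A * M * Aᴴ) *ᵥ v = l * star l * (star v ⬝ᵥ M *ᵥ v) := by
  have hAH : Aᴴ *ᵥ v = star l • v := by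
    rw [← star_star v, ← star_vecMul, hv, star_smul, star_star]
  rw [← mulVec_mulVec, ← mulVec_mulVec, dotProduct_mulVec, hv, hAH, mulVec_smul,
    smul_dotProduct, dotProduct_smul, smul_eq_mul, smul_eq_mul, mul_assoc]

theorem gain_mul_mul_gain_transpose {m R : Type*} [Fintype m] [DecidableEq m] [CommRing R]
    {P : Matrix n n R} {S : Matrix m m R} (C : Matrix m n R) (hP : P.IsSymm) (hS : S.IsSymm)
    (hSu : IsUnit S.det) :
    P * Cᵀ * S⁻¹ * S * (P * Cᵀ * S⁻¹)ᵀ = P * Cᵀ * S⁻¹ * C * P := by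
  rw [nonsing_inv_mul_cancel_right _ _ hSu]
  simp only [transpose_mul, transpose_nonsing_inv, hS.eq, hP.eq, transpose_transpose,
    Matrix.mul_assoc]

end Matrix

theorem pos_of_eq_mul_add_sub_mul {K : Type*} [CommRing K] [PartialOrder K] [IsOrderedRing K]
    [PosMulReflectLT K] {c p q b : K} (hc : 1 ≤ c) (hp : 0 ≤ p) (hq : 0 < q)
    (h : p = c * p + q - c * b) : 0 < b := by
  have hcb : c * b = (c - 1) * p + q := by linear_combination h
  refine pos_of_mul_pos_right ?_ (zero_le_one.trans hc)
  rw [hcb]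
  exact add_pos_of_nonneg_of_pos (mul_nonneg (sub_nonneg.mpr hc) hp) hq

/-- **Positivity of the innovation covariance in unstable directions.** Let `P̄ ⪰ 0`
satisfy the discrete algebraic Riccati equation with `Q ≻ 0` and `R ≻ 0`, let
`K = P̄ Cᵀ (C P̄ Cᵀ + R)⁻¹` and `Q̄ = K (C P̄ Cᵀ + R) Kᵀ`. If `v ≠ 0` is a left
eigenvector of (the complexification of) `A` with eigenvalue `λ`, `|λ| ≥ 1`, then
`v* Q̄ v > 0` (a real number, since `Q̄` is real symmetric). -/
theorem innovation_covariance_pos_in_unstable_directions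
    {n p : ℕ} (A : Matrix (Fin n) (Fin n) ℝ) (C : Matrix (Fin p) (Fin n) ℝ)
    (Q : Matrix (Fin n) (Fin n) ℝ) (R : Matrix (Fin p) (Fin p) ℝ)
    (Pbar : Matrix (Fin n) (Fin n) ℝ)
    (hQ : Q.PosDef) (hR : R.PosDef) (hPbar : Pbar.PosSemidef)
    (hDARE : Pbar =
      A * Pbar * Aᵀ + Q - A * Pbar * Cᵀ * (C * Pbar * Cᵀ + R)⁻¹ * C * Pbar * Aᵀ)
    (v : Fin n → ℂ) (hv : v ≠ 0) (l : ℂ) (hl : 1 ≤ ‖l‖)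
    (heig : Matrix.vecMul (star v) (A.map (algebraMap ℝ ℂ)) = l • star v) :
    0 < (star v ⬝ᵥ
          (((Pbar * Cᵀ * (C * Pbar * Cᵀ + R)⁻¹) * (C * Pbar * Cᵀ + R) *
            (Pbar * Cᵀ * (C * Pbar * Cᵀ + R)⁻¹)ᵀ).map (algebraMap ℝ ℂ)).mulVec v).re ∧
    (star v ⬝ᵥ
          (((Pbar * Cᵀ * (C * Pbar * Cᵀ + R)⁻¹) * (C * Pbar * Cᵀ + R) *
            (Pbar * Cᵀ * (C * Pbar * Cᵀ + R)⁻¹)ᵀ).map (algebraMap ℝ ℂ)).mulVec v).im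
      = 0 := by
  set S := C * Pbar * Cᵀ + R
  set Qbar := Pbar * Cᵀ * S⁻¹ * S * (Pbar * Cᵀ * S⁻¹)ᵀ with hQbar
  have hS : S.PosDef := by
    simpa [conjTranspose_eq_transpose_of_trivial] using
      PosDef.posSemidef_add (hPbar.mul_mul_conjTranspose_same C) hR
  have hRiccati : Pbar = A * Pbar * Aᵀ + Q - A * Qbar * Aᵀ := by
    rw [hQbar, gain_mul_mul_gain_transpose C (isHermitian_iff_isSymm.mp hPbar.isHermitian)
      (isHermitian_iff_isSymm.mp hS.isHermitian) ((isUnit_iff_isUnit_det S).mp hS.isUnit)]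
    simpa only [Matrix.mul_assoc] using hDARE
  have hAT : Aᵀ.map (algebraMap ℝ ℂ) = (A.map (algebraMap ℝ ℂ))ᴴ := by
    rw [← conjTranspose_eq_transpose_of_trivial]
    exact conjTranspose_map _ fun x => (Complex.conj_ofReal x).symm
  have hquad := congrArg (fun M => star v ⬝ᵥ (algebraMap ℝ ℂ).mapMatrix M *ᵥ v) hRiccati
  simp only [map_add, map_sub, map_mul, RingHom.mapMatrix_apply, hAT, sub_mulVec, add_mulVec,
    dotProduct_add, dotProduct_sub, star_dotProduct_mul_mul_conjTranspose_mulVec _ heig] at hquad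
  have hl2 : 1 ≤ l * star l := by
    rw [Complex.star_def, Complex.mul_conj']
    exact_mod_cast one_le_pow₀ hl
  have hQbar_pos := pos_of_eq_mul_add_sub_mul hl2
    (hPbar.map_algebraMap.dotProduct_mulVec_nonneg v) (hQ.map_algebraMap.dotProduct_mulVec_pos hv)
    hquad
  exact (Complex.pos_iff.mp hQbar_pos).imp_right Eq.symm
end

section
/- Let A ∈ ℝ^{n×n}, let λ ∈ ℂ and let v ∈ ℂⁿ be nonzero with v* A = λ v* (v is a left eigenvector of the complexification of A), and let P₀ ∈ ℝ^{n×n} be symmetric with P₀ ⪰ q·I for some q > 0. Then for every k ≥ 0: Tr(A^k P₀ (Aᵀ)^k) ≥ q · |λ|^{2k}. -/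
/-!
From `v* A = λ v*` we get `v* A^k = λ^k v*`; viewing `v*` as a one-row matrix, submultiplicativity
of the Frobenius norm gives `|λ|^k ≤ ‖A^k‖_F`. Since `P₀ ⪰ q I`, conjugating by `A^k` and taking
traces gives `Tr(A^k P₀ (A^k)ᵀ) ≥ q Tr(A^k (A^k)ᵀ) = q ‖A^k‖_F²`.
-/

open Matrix

attribute [local instance] Matrix.frobeniusNormedAddCommGroup Matrix.frobeniusNormedSpace

namespace Matrix

variable {m : Type*} [Fintype m]

theorem vecMul_pow_eq_pow_smul {R : Type*} [CommSemiring R] [DecidableEq m]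
    {B : Matrix m m R} {μ : R} {v : m → R} (h : v ᵥ* B = μ • v) (k : ℕ) :
    v ᵥ* B ^ k = μ ^ k • v := by
  induction k with
  | zero => simp
  | succ k ih => rw [pow_succ, ← vecMul_vecMul, ih, smul_vecMul, h, smul_smul, pow_succ]

theorem norm_le_frobenius_norm_of_vecMul_eq_smul {𝕜 : Type*} [RCLike 𝕜]
    {B : Matrix m m 𝕜} {μ : 𝕜} {v : m → 𝕜} (hv : v ≠ 0) (h : v ᵥ* B = μ • v) :
    ‖μ‖ ≤ ‖B‖ := by
  have hrow : replicateRow Unit v * B = μ • replicateRow Unit v := by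
    rw [← replicateRow_vecMul, h, replicateRow_smul]
  have hpos : 0 < ‖replicateRow Unit v‖ := by
    rw [frobenius_norm_replicateRow, norm_pos_iff]
    simpa using hv
  refine le_of_mul_le_mul_right ?_ hpos
  calc ‖μ‖ * ‖replicateRow Unit v‖ = ‖replicateRow Unit v * B‖ := by rw [hrow, norm_smul]
    _ ≤ ‖replicateRow Unit v‖ * ‖B‖ := frobenius_norm_mul _ _
    _ = ‖B‖ * ‖replicateRow Unit v‖ := mul_comm _ _

theorem frobenius_norm_sq_eq_trace_mul_transpose {n : Type*} [Fintype n] (A : Matrix m n ℝ) :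
    ‖A‖ ^ 2 = (A * Aᵀ).trace := by
  rw [frobenius_norm_def, ← Real.rpow_natCast, ← Real.rpow_mul (by positivity)]
  simp [trace, mul_apply, ← sq]

theorem trace_mul_mul_conjTranspose_mono {n R : Type*} [Fintype n] [CommRing R] [PartialOrder R]
    [StarRing R] [StarOrderedRing R] {P Q : Matrix n n R} (hPQ : (P - Q).PosSemidef)
    (B : Matrix m n R) : (B * Q * Bᴴ).trace ≤ (B * P * Bᴴ).trace := by
  have := (hPQ.mul_mul_conjTranspose_same B).trace_nonneg
  rwa [Matrix.mul_sub, Matrix.sub_mul, trace_sub, sub_nonneg] at this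

end Matrix

theorem trace_conjugated_covariance_lower_bound_general
    {n : ℕ} (A P₀ : Matrix (Fin n) (Fin n) ℝ) (q : ℝ) (hq : 0 < q)
    (hP₀ : (P₀ - q • (1 : Matrix (Fin n) (Fin n) ℝ)).PosSemidef)
    (l : ℂ) (v : Fin n → ℂ) (hv : v ≠ 0)
    (heig : Matrix.vecMul (star v) (A.map (algebraMap ℝ ℂ)) = l • star v) :
    ∀ k : ℕ, q * ‖l‖ ^ (2 * k) ≤ (A ^ k * P₀ * (Aᵀ) ^ k).trace := by
  intro k
  have hnorm : ‖l‖ ^ k ≤ ‖A ^ k‖ := by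
    have := norm_le_frobenius_norm_of_vecMul_eq_smul (star_ne_zero.mpr hv)
      (vecMul_pow_eq_pow_smul heig k)
    rwa [← RingHom.mapMatrix_apply, ← map_pow, RingHom.mapMatrix_apply,
      frobenius_norm_map_eq _ _ (by simp), norm_pow] at this
  calc q * ‖l‖ ^ (2 * k) ≤ q * ‖A ^ k‖ ^ 2 := by
        rw [pow_mul']
        gcongr
    _ = (A ^ k * (q • 1) * (A ^ k)ᴴ).trace := by
        rw [frobenius_norm_sq_eq_trace_mul_transpose, Matrix.mul_smul, Matrix.smul_mul,
          trace_smul, mul_one, conjTranspose_eq_transpose_of_trivial, smul_eq_mul]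
    _ ≤ (A ^ k * P₀ * (Aᵀ) ^ k).trace := by
        rw [← transpose_pow, ← conjTranspose_eq_transpose_of_trivial]
        exact trace_mul_mul_conjTranspose_mono hP₀ _

/-- If `v ≠ 0` is a left eigenvector of (the complexification of) `A` with eigenvalue `λ`
and `P₀` is symmetric with `P₀ ⪰ q·I`, `q > 0`, then for every `k`,
`Tr(A^k P₀ (Aᵀ)^k) ≥ q |λ|^{2k}`. -/
theorem trace_conjugated_covariance_lower_bound
    {n : ℕ} (A P₀ : Matrix (Fin n) (Fin n) ℝ) (q : ℝ) (hq : 0 < q)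
    (hP₀sym : P₀.IsSymm)
    (hP₀ : (P₀ - q • (1 : Matrix (Fin n) (Fin n) ℝ)).PosSemidef)
    (l : ℂ) (v : Fin n → ℂ) (hv : v ≠ 0)
    (heig : Matrix.vecMul (star v) (A.map (algebraMap ℝ ℂ)) = l • star v) :
    ∀ k : ℕ, q * ‖l‖ ^ (2 * k) ≤ (A ^ k * P₀ * (Aᵀ) ^ k).trace :=
  trace_conjugated_covariance_lower_bound_general A P₀ q hq hP₀ l v hv heig
end
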